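/- arXiv:2407.11804 — 7 statements merged into one kernel-verified Lean document; each statement's English description precedes it below -/
import Mathlib

section
/- Let p be an odd prime and let Z ∈ M₂(ℚ_p). Then there exists W ∈ M₂(ℤ_p) such that Z + W ≠ 0, |det(Z+W)|_p ≥ ‖Z+W‖ (where ‖·‖ is the maximum of the p-adic absolute values of the four entries), and |tr(Z+W)|_p ≥ 1. -/
open Matrix

section aux

variable {p : ℕ} [Fact p.Prime]

private lemma clash_aux (n : ℕ) (hpn : ¬ p ∣ n) (z w : ℚ_[p]) (h : w = z + n)
    (h1 : ‖z‖ < 1) (h2 : ‖w‖ < 1) : False := by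
  have hn : ((n : ℤ) : ℚ_[p]) = w + (-z) := by push_cast; rw [h]; ring
  have hlt : ‖((n : ℤ) : ℚ_[p])‖ < 1 := by
    rw [hn]
    calc ‖w + (-z)‖ ≤ max ‖w‖ ‖(-z)‖ := Padic.nonarchimedean _ _
    _ < 1 := by rw [norm_neg]; exact max_lt h2 h1
  rw [Padic.norm_intCast_lt_one_iff] at hlt
  exact hpn (by exact_mod_cast hlt)

private lemma key (hp : p ≠ 2) (x y : ℚ_[p]) :
    ∃ t : ℚ_[p], ‖t‖ ≤ 1 ∧ 1 ≤ ‖x + t‖ ∧ 1 ≤ ‖y + t‖ := by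
  have hp1 : ¬ p ∣ 1 := by
    simpa [Nat.dvd_one] using (Fact.out : p.Prime).ne_one
  have hp2 : ¬ p ∣ 2 := fun h =>
    hp ((Nat.prime_dvd_prime_iff_eq Fact.out Nat.prime_two).mp h)
  by_contra hcon
  have H : ∀ t : ℚ_[p], ‖t‖ ≤ 1 → ‖x + t‖ < 1 ∨ ‖y + t‖ < 1 := by
    intro t ht
    by_contra h'
    push_neg at h'
    exact hcon ⟨t, ht, h'.1, h'.2⟩
  have h0 := H 0 (by norm_num)
  have h1 := H 1 (by norm_num)
  have h2 := H 2 (by simpa using Padic.norm_int_le_one (p := p) 2)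
  rcases h0 with h0 | h0 <;> rcases h1 with h1 | h1 <;> rcases h2 with h2 | h2
  · exact clash_aux 1 hp1 (x + 0) (x + 1) (by push_cast; ring) h0 h1
  · exact clash_aux 1 hp1 (x + 0) (x + 1) (by push_cast; ring) h0 h1
  · exact clash_aux 2 hp2 (x + 0) (x + 2) (by push_cast; ring) h0 h2
  · exact clash_aux 1 hp1 (y + 1) (y + 2) (by push_cast; ring) h1 h2
  · exact clash_aux 1 hp1 (x + 1) (x + 2) (by push_cast; ring) h1 h2
  · exact clash_aux 2 hp2 (y + 0) (y + 2) (by push_cast; ring) h0 h2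
  · exact clash_aux 1 hp1 (y + 0) (y + 1) (by push_cast; ring) h0 h1
  · exact clash_aux 1 hp1 (y + 0) (y + 1) (by push_cast; ring) h0 h1

private lemma norm_two_eq_one (hp : p ≠ 2) : ‖(2 : ℚ_[p])‖ = 1 := by
  refine le_antisymm (by simpa using Padic.norm_int_le_one (p := p) 2) ?_
  by_contra h
  push_neg at h
  have h2 : ‖((2 : ℤ) : ℚ_[p])‖ < 1 := by exact_mod_cast h
  rw [Padic.norm_intCast_lt_one_iff] at h2
  have : p ∣ 2 := by exact_mod_cast h2
  exact hp ((Nat.prime_dvd_prime_iff_eq Fact.out Nat.prime_two).mp this)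

private lemma lemD (hp : p ≠ 2) (a b c d : ℚ_[p]) (ha : a ≠ 0) :
    ∃ t : ℚ_[p], ‖t‖ ≤ 1 ∧ ‖a‖ ≤ ‖a * (d + t) - b * c‖ ∧ 1 ≤ ‖a + (d + t)‖ := by
  obtain ⟨t, ht, hx, hy⟩ := key hp (d - b * c / a) (a + d)
  refine ⟨t, ht, ?_, ?_⟩
  · have he : a * (d + t) - b * c = a * (d - b * c / a + t) := by field_simp; ring
    rw [he, norm_mul]
    exact le_mul_of_one_le_right (norm_nonneg a) hx
  · rw [show a + (d + t) = (a + d) + t by ring]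
    exact hy

private lemma lemO (hp : p ≠ 2) (a b c d : ℚ_[p]) (hb : b ≠ 0) :
    ∃ s u : ℚ_[p], ‖s‖ ≤ 1 ∧ ‖u‖ ≤ 1 ∧
      ‖b‖ ≤ ‖a * (d + s) - b * (c + u)‖ ∧ 1 ≤ ‖a + (d + s)‖ := by
  obtain ⟨s, hs, hy, -⟩ := key hp (a + d) (a + d)
  obtain ⟨u, hu, hx, -⟩ := key hp (c - a * (d + s) / b) 0
  refine ⟨s, u, hs, hu, ?_, by rw [show a + (d + s) = (a + d) + s by ring]; exact hy⟩
  have he : a * (d + s) - b * (c + u) = (-b) * (c - a * (d + s) / b + u) := by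
    field_simp; ring
  rw [he, norm_mul, norm_neg]
  exact le_mul_of_one_le_right (norm_nonneg b) hx

end aux

/-- For an odd prime `p` and any `Z ∈ M₂(ℚ_p)`, there exists `W ∈ M₂(ℤ_p)`
(i.e. all entries of norm `≤ 1`) such that `Z + W ≠ 0`, the determinant of
`Z + W` has `p`-adic absolute value at least the maximum of the absolute
values of the entries of `Z + W`, and `|tr(Z+W)|_p ≥ 1`. -/
theorem exists_good_representative_M2_Qp
    (p : ℕ) [Fact p.Prime] (hp : p ≠ 2)
    (Z : Matrix (Fin 2) (Fin 2) ℚ_[p]) :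
    ∃ W : Matrix (Fin 2) (Fin 2) ℚ_[p],
      (∀ i j, ‖W i j‖ ≤ 1) ∧
      Z + W ≠ 0 ∧
      (∀ i j, ‖(Z + W) i j‖ ≤ ‖(Z + W).det‖) ∧
      1 ≤ ‖(Z + W).trace‖ := by
  obtain ⟨a, ha⟩ : ∃ x, Z 0 0 = x := ⟨_, rfl⟩
  obtain ⟨b, hb⟩ : ∃ x, Z 0 1 = x := ⟨_, rfl⟩
  obtain ⟨c, hc⟩ : ∃ x, Z 1 0 = x := ⟨_, rfl⟩
  obtain ⟨d, hd⟩ : ∃ x, Z 1 1 = x := ⟨_, rfl⟩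
  by_cases hsmall : ‖a‖ ≤ 1 ∧ ‖b‖ ≤ 1 ∧ ‖c‖ ≤ 1 ∧ ‖d‖ ≤ 1
  · -- all entries integral: take W = 1 - Z
    have hZ : ∀ i j, ‖Z i j‖ ≤ 1 := by
      intro i j
      fin_cases i <;> fin_cases j <;>
        simp only [Fin.mk_zero, Fin.mk_one, ha, hb, hc, hd] <;>
        first
        | exact hsmall.1
        | exact hsmall.2.1
        | exact hsmall.2.2.1
        | exact hsmall.2.2.2
    have hZW : Z + (1 - Z) = 1 := by abel
    refine ⟨1 - Z, ?_, ?_, ?_, ?_⟩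
    · intro i j
      have h1 : ‖(1 : Matrix (Fin 2) (Fin 2) ℚ_[p]) i j‖ ≤ 1 := by
        rw [Matrix.one_apply]; split <;> simp
      have hna := Padic.nonarchimedean
        ((1 : Matrix (Fin 2) (Fin 2) ℚ_[p]) i j) (-(Z i j))
      rw [Matrix.sub_apply, sub_eq_add_neg]
      exact le_trans hna (max_le h1 (by rw [norm_neg]; exact hZ i j))
    · rw [hZW]; exact one_ne_zero
    · intro i j
      rw [hZW, Matrix.det_one, Matrix.one_apply]
      split <;> simp
    · rw [hZW, Matrix.trace_one]
      simp only [Fintype.card_fin, Nat.cast_ofNat]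
      rw [norm_two_eq_one hp]
  · have hm1 : 1 < max (max ‖a‖ ‖b‖) (max ‖c‖ ‖d‖) := by
      by_contra h
      push_neg at h
      simp only [max_le_iff] at h
      exact hsmall ⟨h.1.1, h.1.2, h.2.1, h.2.2⟩
    rcases le_total (max ‖a‖ ‖b‖) (max ‖c‖ ‖d‖) with h12 | h12
    · rcases le_total ‖c‖ ‖d‖ with hcd | hcd
      · -- d is the max
        have htop : max (max ‖a‖ ‖b‖) (max ‖c‖ ‖d‖) ≤ ‖d‖ :=
          max_le (h12.trans (max_le hcd le_rfl)) (max_le hcd le_rfl)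
        have hd1 : 1 < ‖d‖ := hm1.trans_le htop
        have had : ‖a‖ ≤ ‖d‖ := (le_max_left _ _).trans ((le_max_left _ _).trans htop)
        have hbd : ‖b‖ ≤ ‖d‖ := (le_max_right _ _).trans ((le_max_left _ _).trans htop)
        have hcd' : ‖c‖ ≤ ‖d‖ := hcd
        have hd0 : d ≠ 0 := by intro h; rw [h, norm_zero] at hd1; linarith
        obtain ⟨t, ht, hdet, htr⟩ := lemD hp d c b a hd0
        have hM : Z + (!![t, 0; 0, 0] : Matrix (Fin 2) (Fin 2) ℚ_[p])
            = !![a + t, b; c, d] := by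
          ext i j
          fin_cases i <;> fin_cases j <;> simp [Fin.mk_zero, Fin.mk_one, ha, hb, hc, hd]
        refine ⟨!![t, 0; 0, 0], ?_, ?_, ?_, ?_⟩
        · intro i j
          fin_cases i <;> fin_cases j <;>
            first
            | simpa using ht
            | simp
        · rw [hM]
          intro h
          apply hd0
          have := congrFun (congrFun h 1) 1
          simpa using this
        · rw [hM]
          have hdet' : ‖d‖ ≤ ‖(!![a + t, b; c, d] : Matrix (Fin 2) (Fin 2) ℚ_[p]).det‖ := by
            rw [Matrix.det_fin_two_of, show (a + t) * d - b * c = d * (a + t) - c * b by ring]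
            exact hdet
          have hat : ‖a + t‖ ≤ ‖d‖ :=
            (Padic.nonarchimedean a t).trans (max_le had (ht.trans hd1.le))
          intro i j
          fin_cases i <;> fin_cases j <;> simp only [] <;>
            first
            | exact le_trans (by simpa using hat) hdet'
            | exact le_trans (by simpa using hbd) hdet'
            | exact le_trans (by simpa using hcd') hdet'
            | exact le_trans (by simpa using le_rfl) hdet'
        · rw [hM, Matrix.trace_fin_two_of,
            show (a + t) + d = d + (a + t) by ring]
          exact htr
      · -- c is the max
        have htop : max (max ‖a‖ ‖b‖) (max ‖c‖ ‖d‖) ≤ ‖c‖ :=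
          max_le (h12.trans (max_le le_rfl hcd)) (max_le le_rfl hcd)
        have hc1 : 1 < ‖c‖ := hm1.trans_le htop
        have hac : ‖a‖ ≤ ‖c‖ := (le_max_left _ _).trans ((le_max_left _ _).trans htop)
        have hbc : ‖b‖ ≤ ‖c‖ := (le_max_right _ _).trans ((le_max_left _ _).trans htop)
        have hdc : ‖d‖ ≤ ‖c‖ := hcd
        have hc0 : c ≠ 0 := by intro h; rw [h, norm_zero] at hc1; linarith
        obtain ⟨s, u, hs, hu, hdet, htr⟩ := lemO hp d c b a hc0
        have hM : Z + (!![s, u; 0, 0] : Matrix (Fin 2) (Fin 2) ℚ_[p])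
            = !![a + s, b + u; c, d] := by
          ext i j
          fin_cases i <;> fin_cases j <;> simp [Fin.mk_zero, Fin.mk_one, ha, hb, hc, hd]
        refine ⟨!![s, u; 0, 0], ?_, ?_, ?_, ?_⟩
        · intro i j
          fin_cases i <;> fin_cases j <;>
            first
            | simpa using hs
            | simpa using hu
            | simp
        · rw [hM]
          intro h
          apply hc0
          have := congrFun (congrFun h 1) 0
          simpa using this
        · rw [hM]
          have hdet' : ‖c‖ ≤ ‖(!![a + s, b + u; c, d] : Matrix (Fin 2) (Fin 2) ℚ_[p]).det‖ := by
            rw [Matrix.det_fin_two_of,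
              show (a + s) * d - (b + u) * c = d * (a + s) - c * (b + u) by ring]
            exact hdet
          have has : ‖a + s‖ ≤ ‖c‖ :=
            (Padic.nonarchimedean a s).trans (max_le hac (hs.trans hc1.le))
          have hbu : ‖b + u‖ ≤ ‖c‖ :=
            (Padic.nonarchimedean b u).trans (max_le hbc (hu.trans hc1.le))
          intro i j
          fin_cases i <;> fin_cases j <;>
            first
            | exact le_trans (by simpa using has) hdet'
            | exact le_trans (by simpa using hbu) hdet'
            | exact le_trans (by simpa using hdc) hdet'
            | exact le_trans (by simpa using le_rfl) hdet'
        · rw [hM, Matrix.trace_fin_two_of,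
            show (a + s) + d = d + (a + s) by ring]
          exact htr
    · rcases le_total ‖a‖ ‖b‖ with hab | hab
      · -- b is the max
        have htop : max (max ‖a‖ ‖b‖) (max ‖c‖ ‖d‖) ≤ ‖b‖ :=
          max_le (max_le hab le_rfl) (h12.trans (max_le hab le_rfl))
        have hb1 : 1 < ‖b‖ := hm1.trans_le htop
        have hab' : ‖a‖ ≤ ‖b‖ := hab
        have hcb : ‖c‖ ≤ ‖b‖ := (le_max_left _ _).trans ((le_max_right _ _).trans htop)
        have hdb : ‖d‖ ≤ ‖b‖ := (le_max_right _ _).trans ((le_max_right _ _).trans htop)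
        have hb0 : b ≠ 0 := by intro h; rw [h, norm_zero] at hb1; linarith
        obtain ⟨s, u, hs, hu, hdet, htr⟩ := lemO hp a b c d hb0
        have hM : Z + (!![0, 0; u, s] : Matrix (Fin 2) (Fin 2) ℚ_[p])
            = !![a, b; c + u, d + s] := by
          ext i j
          fin_cases i <;> fin_cases j <;> simp [Fin.mk_zero, Fin.mk_one, ha, hb, hc, hd]
        refine ⟨!![0, 0; u, s], ?_, ?_, ?_, ?_⟩
        · intro i j
          fin_cases i <;> fin_cases j <;>
            first
            | simpa using hs
            | simpa using hu
            | simp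
        · rw [hM]
          intro h
          apply hb0
          have := congrFun (congrFun h 0) 1
          simpa using this
        · rw [hM]
          have hdet' : ‖b‖ ≤ ‖(!![a, b; c + u, d + s] : Matrix (Fin 2) (Fin 2) ℚ_[p]).det‖ := by
            rw [Matrix.det_fin_two_of,
              show a * (d + s) - b * (c + u) = a * (d + s) - b * (c + u) by ring]
            exact hdet
          have hcu : ‖c + u‖ ≤ ‖b‖ :=
            (Padic.nonarchimedean c u).trans (max_le hcb (hu.trans hb1.le))
          have hds : ‖d + s‖ ≤ ‖b‖ :=
            (Padic.nonarchimedean d s).trans (max_le hdb (hs.trans hb1.le))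
          intro i j
          fin_cases i <;> fin_cases j <;>
            first
            | exact le_trans (by simpa using hab') hdet'
            | exact le_trans (by simpa using hcu) hdet'
            | exact le_trans (by simpa using hds) hdet'
            | exact le_trans (by simpa using le_rfl) hdet'
        · rw [hM, Matrix.trace_fin_two_of]
          exact htr
      · -- a is the max
        have htop : max (max ‖a‖ ‖b‖) (max ‖c‖ ‖d‖) ≤ ‖a‖ :=
          max_le (max_le le_rfl hab) (h12.trans (max_le le_rfl hab))
        have ha1 : 1 < ‖a‖ := hm1.trans_le htop
        have hba : ‖b‖ ≤ ‖a‖ := hab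
        have hca : ‖c‖ ≤ ‖a‖ := (le_max_left _ _).trans ((le_max_right _ _).trans htop)
        have hda : ‖d‖ ≤ ‖a‖ := (le_max_right _ _).trans ((le_max_right _ _).trans htop)
        have ha0 : a ≠ 0 := by intro h; rw [h, norm_zero] at ha1; linarith
        obtain ⟨t, ht, hdet, htr⟩ := lemD hp a b c d ha0
        have hM : Z + (!![0, 0; 0, t] : Matrix (Fin 2) (Fin 2) ℚ_[p])
            = !![a, b; c, d + t] := by
          ext i j
          fin_cases i <;> fin_cases j <;> simp [Fin.mk_zero, Fin.mk_one, ha, hb, hc, hd]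
        refine ⟨!![0, 0; 0, t], ?_, ?_, ?_, ?_⟩
        · intro i j
          fin_cases i <;> fin_cases j <;>
            first
            | simpa using ht
            | simp
        · rw [hM]
          intro h
          apply ha0
          have := congrFun (congrFun h 0) 0
          simpa using this
        · rw [hM]
          have hdet' : ‖a‖ ≤ ‖(!![a, b; c, d + t] : Matrix (Fin 2) (Fin 2) ℚ_[p]).det‖ := by
            rw [Matrix.det_fin_two_of]
            exact hdet
          have hdt : ‖d + t‖ ≤ ‖a‖ :=
            (Padic.nonarchimedean d t).trans (max_le hda (ht.trans ha1.le))
          intro i j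
          fin_cases i <;> fin_cases j <;>
            first
            | exact le_trans (by simpa using hba) hdet'
            | exact le_trans (by simpa using hca) hdet'
            | exact le_trans (by simpa using hdt) hdet'
            | exact le_trans (by simpa using le_rfl) hdet'
        · rw [hM, Matrix.trace_fin_two_of]
          exact htr
end

section
/- Let η ∈ M₂(ℤ) be primitive (the gcd of its four entries is 1) with det(η) ≠ 0, and let K ≥ 1 be an integer dividing det(η). If A ∈ M₂(ℤ) satisfies A·η ≡ 0 (mod K·M₂(ℤ)), then K divides det(A). -/
/-!
Multiplying `A * η ≡ 0 (mod K)` on the left by `adj A` gives `K ∣ det A * η i j` for every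
entry. In a principal ideal ring the entries of a primitive matrix generate the unit ideal,
so `det A` is a combination of the `det A * η i j`, and hence divisible by `K`.
-/

open Matrix

theorem Ideal.span_range_eq_top_of_forall_dvd_isUnit {R ι : Type*} [CommRing R]
    [IsPrincipalIdealRing R] {x : ι → R} (hx : ∀ d, (∀ i, d ∣ x i) → IsUnit d) :
    Ideal.span (Set.range x) = ⊤ := by
  obtain ⟨g, hg⟩ := (IsPrincipalIdealRing.principal (Ideal.span (Set.range x))).principal
  replace hg : Ideal.span (Set.range x) = Ideal.span {g} := hg
  have hgx : ∀ i, g ∣ x i := fun i =>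
    Ideal.mem_span_singleton.mp (hg ▸ Ideal.subset_span (Set.mem_range_self i))
  rw [hg, Ideal.span_singleton_eq_top]
  exact hx g hgx

theorem dvd_of_forall_dvd_mul_of_span_eq_top {R ι : Type*} [CommRing R] {x : ι → R}
    (hx : Ideal.span (Set.range x) = ⊤) {K c : R} (h : ∀ i, K ∣ c * x i) : K ∣ c := by
  have hone : (1 : R) ∈ Ideal.span (Set.range x) := hx ▸ Submodule.mem_top
  simpa using Submodule.span_induction (p := fun y _ => K ∣ c * y)
    (by rintro _ ⟨i, rfl⟩; exact h i)
    (by simp)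
    (fun y z _ _ hy hz => by rw [mul_add]; exact dvd_add hy hz)
    (fun a y _ hy => by rw [smul_eq_mul, mul_left_comm]; exact dvd_mul_of_dvd_right hy a)
    hone

theorem Matrix.dvd_det_mul_of_forall_dvd_mul {R n : Type*} [CommRing R] [Fintype n]
    [DecidableEq n] {K : R} {A B : Matrix n n R} (h : ∀ i j, K ∣ (A * B) i j) (i j : n) :
    K ∣ A.det * B i j := by
  have hadj : (A.adjugate * (A * B)) i j = A.det * B i j := by
    rw [← Matrix.mul_assoc, adjugate_mul, smul_mul, Matrix.one_mul, smul_apply, smul_eq_mul]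
  rw [← hadj, mul_apply]
  exact Finset.dvd_sum fun l _ => dvd_mul_of_dvd_right (h l j) _

theorem Matrix.dvd_det_of_forall_dvd_mul_of_primitive {R n : Type*} [CommRing R]
    [IsPrincipalIdealRing R] [Fintype n] [DecidableEq n] {K : R} {A B : Matrix n n R}
    (hB : ∀ d, (∀ i j, d ∣ B i j) → IsUnit d) (h : ∀ i j, K ∣ (A * B) i j) : K ∣ A.det :=
  dvd_of_forall_dvd_mul_of_span_eq_top (x := fun p : n × n => B p.1 p.2)
    (Ideal.span_range_eq_top_of_forall_dvd_isUnit fun d hd => hB d fun i j => hd (i, j))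
    fun p => dvd_det_mul_of_forall_dvd_mul h p.1 p.2

theorem det_dvd_of_mul_primitive_cong_zero_general
    (η : Matrix (Fin 2) (Fin 2) ℤ)
    (hprim : ∀ d : ℤ, (∀ i j, d ∣ η i j) → IsUnit d)
    (K : ℤ)
    (A : Matrix (Fin 2) (Fin 2) ℤ)
    (hA : ∀ i j, K ∣ (A * η) i j) :
    K ∣ A.det :=
  dvd_det_of_forall_dvd_mul_of_primitive hprim hA

/-- Let `η ∈ M₂(ℤ)` be primitive (any common divisor of its entries is a unit)
with `det η ≠ 0`, and let `K ≥ 1` divide `det η`. If `A·η ≡ 0 (mod K)`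
entrywise, then `K ∣ det A`. -/
theorem det_dvd_of_mul_primitive_cong_zero
    (η : Matrix (Fin 2) (Fin 2) ℤ)
    (hprim : ∀ d : ℤ, (∀ i j, d ∣ η i j) → IsUnit d)
    (hdet : η.det ≠ 0)
    (K : ℤ) (hK : 1 ≤ K) (hKdet : K ∣ η.det)
    (A : Matrix (Fin 2) (Fin 2) ℤ)
    (hA : ∀ i j, K ∣ (A * η) i j) :
    K ∣ A.det :=
  det_dvd_of_mul_primitive_cong_zero_general η hprim K A hA
end

section
/- Let η ∈ M₂(ℤ) be primitive with det(η) ≠ 0, and let K ≥ 1 be an integer dividing det(η). Then the number of θ ∈ M₂(ℤ/Kℤ) with η·θ ≡ 0 (mod K) is exactly K². -/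
/-!
By the Chinese remainder theorem the count is multiplicative in `K`, so it suffices to treat
`K = p ^ k`. Since `η` is primitive, `p` does not divide some entry of `η`, and that entry is a
unit modulo `p ^ k`. A `2 × 2` matrix with vanishing determinant and a unit entry has a kernel
isomorphic to the ring of scalars, so each of the two columns of `θ` ranges over `p ^ k` values.
-/

open Matrix

theorem ZMod.isUnit_intCast_primePow_of_not_dvd {p : ℕ} (hp : p.Prime) (k : ℕ) {a : ℤ}
    (ha : ¬(p : ℤ) ∣ a) : IsUnit (a : ZMod (p ^ k)) := by
  rw [ZMod.coe_int_isUnit_iff_isCoprime, Nat.cast_pow]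
  exact ((Nat.prime_iff_prime_int.mp hp).coprime_iff_not_dvd.2 ha).pow_left

namespace Matrix

section Semiring

variable {R : Type*} [NonUnitalNonAssocSemiring R]

def rightAnnihilatorEquivPi {m n o : Type*} [Fintype n] (A : Matrix m n R) :
    {θ : Matrix n o R // A * θ = 0} ≃ (o → {v : n → R // A *ᵥ v = 0}) :=
  (Equiv.piComm _).subtypeEquiv (fun θ => by
    simp only [← Matrix.ext_iff, funext_iff, mulVec, dotProduct, zero_apply,
      Pi.zero_apply, Equiv.piComm_apply, Function.swap]
    exact forall_comm) |>.trans Equiv.subtypePiEquivPi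

def mulVecKerSubmatrixEquiv {l m n o : Type*} [Fintype n] [Fintype o] (A : Matrix m n R)
    (e₁ : l ≃ m) (e₂ : o ≃ n) :
    {v : o → R // A.submatrix e₁ e₂ *ᵥ v = 0} ≃ {v : n → R // A *ᵥ v = 0} :=
  (e₂.arrowCongr (Equiv.refl R)).subtypeEquiv fun v => by
    rw [submatrix_mulVec_equiv, ← (e₁.arrowCongr (Equiv.refl R)).symm.injective.eq_iff]
    simp [Equiv.arrowCongr]

end Semiring

section CommRing

variable {R : Type*} [CommRing R]

theorem det_submatrix_perm {n : Type*} [Fintype n] [DecidableEq n] (A : Matrix n n R)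
    (σ τ : Equiv.Perm n) :
    (A.submatrix σ τ).det = Equiv.Perm.sign σ * (Equiv.Perm.sign τ * A.det) := by
  rw [← det_permute', ← det_permute, submatrix_submatrix]
  rfl

noncomputable def mulVecKerEquivOfDetEqZero (A : Matrix (Fin 2) (Fin 2) R) (hdet : A.det = 0)
    (hu : IsUnit (A 0 0)) : {v : Fin 2 → R // A *ᵥ v = 0} ≃ R where
  toFun v := v.1 1
  invFun t := ⟨![-(hu.unit⁻¹ * A 0 1 * t), t], by
    have hinv : A 0 0 * ↑hu.unit⁻¹ = 1 := hu.mul_val_inv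
    rw [det_fin_two] at hdet
    ext k
    fin_cases k <;>
      simp only [Fin.zero_eta, Fin.mk_one, mulVec_fin_two, cons_val_zero, cons_val_one,
        cons_val_fin_one, Pi.zero_apply]
    · linear_combination -(A 0 1 * t) * hinv
    · linear_combination ↑hu.unit⁻¹ * t * hdet - t * A 1 1 * hinv⟩
  left_inv := by
    rintro ⟨v, hv⟩
    have hinv : ↑hu.unit⁻¹ * A 0 0 = 1 := hu.val_inv_mul
    have hrow : A 0 0 * v 0 + A 0 1 * v 1 = 0 := by
      simpa [mulVec_fin_two] using congrFun hv 0
    ext k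
    fin_cases k
    · simp only [Fin.zero_eta, cons_val_zero]
      linear_combination -↑hu.unit⁻¹ * hrow + v 0 * hinv
    · rfl
  right_inv _ := rfl

theorem card_mulVecKer_of_det_eq_zero (A : Matrix (Fin 2) (Fin 2) R) (hdet : A.det = 0)
    {i j : Fin 2} (hu : IsUnit (A i j)) :
    Nat.card {v : Fin 2 → R // A *ᵥ v = 0} = Nat.card R := by
  let B := A.submatrix (Equiv.swap 0 i) (Equiv.swap 0 j)
  have hB : B.det = 0 := by rw [det_submatrix_perm, hdet, mul_zero, mul_zero]
  have hB00 : IsUnit (B 0 0) := by simpa [B] using hu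
  rw [← Nat.card_congr (mulVecKerSubmatrixEquiv A (Equiv.swap 0 i) (Equiv.swap 0 j)),
    Nat.card_congr (mulVecKerEquivOfDetEqZero B hB hB00)]

end CommRing

section IntCast

variable {m n : Type*} [Fintype n] {R S : Type*} [Ring R] [Ring S] (η : Matrix m n ℤ)

theorem map_intCast_mulVec_comp (f : R →+* S) (v : n → R) :
    η.map (Int.cast : ℤ → S) *ᵥ (f ∘ v) = f ∘ (η.map (Int.cast : ℤ → R) *ᵥ v) := by
  ext i
  rw [Function.comp_apply, RingHom.map_mulVec, map_map]
  congr
  ext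
  simp

def intCastMulVecKerCongr (e : R ≃+* S) :
    {v : n → R // η.map (Int.cast : ℤ → R) *ᵥ v = 0} ≃
      {v : n → S // η.map (Int.cast : ℤ → S) *ᵥ v = 0} :=
  (Equiv.arrowCongr (Equiv.refl n) e.toEquiv).subtypeEquiv fun v => by
    change _ ↔ η.map Int.cast *ᵥ ((e : R →+* S) ∘ v) = 0
    rw [map_intCast_mulVec_comp]
    simp [funext_iff]

def intCastMulVecKerProdEquiv :
    {v : n → R × S // η.map (Int.cast : ℤ → R × S) *ᵥ v = 0} ≃
      {v : n → R // η.map (Int.cast : ℤ → R) *ᵥ v = 0} ×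
        {v : n → S // η.map (Int.cast : ℤ → S) *ᵥ v = 0} :=
  ((Equiv.arrowProdEquivProdArrow _ _ _).subtypeEquiv fun v => by
    change _ ↔ η.map Int.cast *ᵥ (RingHom.fst R S ∘ v) = 0 ∧
      η.map Int.cast *ᵥ (RingHom.snd R S ∘ v) = 0
    rw [map_intCast_mulVec_comp, map_intCast_mulVec_comp]
    simp [funext_iff, Prod.ext_iff, forall_and]).trans Equiv.subtypeProdEquivProd

end IntCast

theorem exists_isUnit_intCast_apply_of_primitive {m n : Type*} (η : Matrix m n ℤ)
    (hprim : ∀ d : ℤ, (∀ i j, d ∣ η i j) → IsUnit d) {p : ℕ} (hp : p.Prime) (k : ℕ) :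
    ∃ i j, IsUnit ((η i j : ℤ) : ZMod (p ^ k)) := by
  by_contra! h
  have hunit := hprim p fun i j => by_contra fun hdvd =>
    h i j (ZMod.isUnit_intCast_primePow_of_not_dvd hp k hdvd)
  exact (Nat.prime_iff_prime_int.mp hp).not_isUnit hunit

theorem card_intCast_mulVecKer_zmod (η : Matrix (Fin 2) (Fin 2) ℤ)
    (hprim : ∀ d : ℤ, (∀ i j, d ∣ η i j) → IsUnit d) (hdet : η.det ≠ 0) (N : ℕ)
    (hN : (N : ℤ) ∣ η.det) :
    Nat.card {v : Fin 2 → ZMod N // η.map (Int.cast : ℤ → ZMod N) *ᵥ v = 0} = N := by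
  induction N using Nat.recOnPrimeCoprime with
  | zero => exact absurd (zero_dvd_iff.mp (by exact_mod_cast hN)) hdet
  | prime_pow p k hp =>
    obtain ⟨i, j, hu⟩ := η.exists_isUnit_intCast_apply_of_primitive hprim hp k
    have hdet0 : (η.map (Int.cast : ℤ → ZMod (p ^ k))).det = 0 := by
      rw [← Int.cast_det, ZMod.intCast_zmod_eq_zero_iff_dvd]
      exact hN
    rw [card_mulVecKer_of_det_eq_zero _ hdet0 hu, Nat.card_zmod]
  | coprime a b _ _ hab iha ihb =>
    rw [Nat.card_congr ((η.intCastMulVecKerCongr (ZMod.chineseRemainder hab)).trans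
        η.intCastMulVecKerProdEquiv), Nat.card_prod,
      iha (dvd_trans (by simp) hN), ihb (dvd_trans (by simp) hN)]

end Matrix

theorem card_right_annihilator_mod_K_general
    (η : Matrix (Fin 2) (Fin 2) ℤ)
    (hprim : ∀ d : ℤ, (∀ i j, d ∣ η i j) → IsUnit d)
    (hdet : η.det ≠ 0)
    (K : ℕ) (hKdet : (K : ℤ) ∣ η.det) :
    Nat.card {θ : Matrix (Fin 2) (Fin 2) (ZMod K) //
        (η.map (Int.cast : ℤ → ZMod K)) * θ = 0} = K ^ 2 := by
  rw [Nat.card_congr (rightAnnihilatorEquivPi _), Nat.card_pi,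
    η.card_intCast_mulVecKer_zmod hprim hdet K hKdet, Finset.prod_const, Finset.card_univ,
    Fintype.card_fin]

/-- Let `η ∈ M₂(ℤ)` be primitive with `det η ≠ 0`, and let `K ≥ 1` be an
integer dividing `det η`. Then the number of `θ ∈ M₂(ℤ/Kℤ)` with
`η·θ ≡ 0 (mod K)` is exactly `K²`. -/
theorem card_right_annihilator_mod_K
    (η : Matrix (Fin 2) (Fin 2) ℤ)
    (hprim : ∀ d : ℤ, (∀ i j, d ∣ η i j) → IsUnit d)
    (hdet : η.det ≠ 0)
    (K : ℕ) (hK : 1 ≤ K) (hKdet : (K : ℤ) ∣ η.det) :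
    Nat.card {θ : Matrix (Fin 2) (Fin 2) (ZMod K) //
        (η.map (Int.cast : ℤ → ZMod K)) * θ = 0} = K ^ 2 :=
  card_right_annihilator_mod_K_general η hprim hdet K hKdet
end

section
/- Let η ∈ M₂(ℤ) with det(η) ≠ 0 be primitive, and set m = |det(η)|. Then the image of the map M₂(ℤ/mℤ) → M₂(ℤ/mℤ) sending A ↦ adj(η)·A·η (where adj denotes the adjugate, reduced mod m) is a cyclic ℤ/mℤ-submodule of M₂(ℤ/mℤ) of cardinality m; in particular it is isomorphic to ℤ/mℤ as a ℤ/mℤ-module. -/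
/-!
Over a principal ideal domain, Smith normal form writes `η = P * diagonal a * Q` with `P`, `Q`
unimodular. Every common divisor of `a 0` and `a 1` divides all entries of `η`, so primitivity
makes them coprime, and then `diagonal a` is itself unimodularly equivalent to
`diagonal ![1, a 0 * a 1]`, whose corner is `± det η`. Modulo `m = |det η|` we get
`η = P * diagonal ![1, 0] * Q`, hence
`adj η * A * η = adj Q * (adj (diagonal ![1, 0]) * B * diagonal ![1, 0]) * Q` with
`B = adj P * A * P`. Conjugation by a unimodular matrix is bijective, and the middle factor is
`B 1 0 • single 1 0 1`, so the image is the free line spanned by `adj Q * single 1 0 1 * Q`.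
-/

open Matrix

namespace Matrix

section CommRing

variable {R : Type*} [CommRing R] {n : Type*} [Fintype n] [DecidableEq n]

theorem mul_adjugate_mul_mul_mul_adjugate (P A : Matrix n n R) :
    P * (adjugate P * A * P) * adjugate P = P.det ^ 2 • A := by
  calc P * (adjugate P * A * P) * adjugate P = (P * adjugate P) * A * (P * adjugate P) := by
        simp only [Matrix.mul_assoc]
    _ = P.det ^ 2 • A := by
        rw [mul_adjugate, smul_mul_assoc, one_mul, mul_smul_comm, mul_one, smul_smul, sq]

theorem adjugate_mul_mul_adjugate_mul_mul (P A : Matrix n n R) :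
    adjugate P * (P * A * adjugate P) * P = P.det ^ 2 • A := by
  calc adjugate P * (P * A * adjugate P) * P = (adjugate P * P) * A * (adjugate P * P) := by
        simp only [Matrix.mul_assoc]
    _ = P.det ^ 2 • A := by
        rw [adjugate_mul, smul_mul_assoc, one_mul, mul_smul_comm, mul_one, smul_smul, sq]

theorem bijective_adjugate_mul_mul {P : Matrix n n R} (hP : IsUnit P.det) :
    Function.Bijective fun A : Matrix n n R ↦ adjugate P * A * P := by
  have hP2 : IsUnit (P.det ^ 2) := hP.pow 2
  refine ⟨fun A B hAB ↦ ?_, fun B ↦ ⟨(↑hP2.unit⁻¹ : R) • (P * B * adjugate P), ?_⟩⟩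
  · have h := congrArg (fun X ↦ P * X * adjugate P) hAB
    simp only [mul_adjugate_mul_mul_mul_adjugate] at h
    exact hP2.smul_left_cancel.mp h
  · simp only [mul_smul_comm, smul_mul_assoc, adjugate_mul_mul_adjugate_mul_mul, smul_smul,
      IsUnit.val_inv_mul, one_smul]

theorem injective_smul_adjugate_mul_single_mul {Q : Matrix n n R} (hQ : IsUnit Q.det)
    (i j : n) : Function.Injective fun c : R ↦ c • (adjugate Q * single i j 1 * Q) := by
  have hsmul (c : R) : c • (adjugate Q * single i j 1 * Q) = adjugate Q * single i j c * Q := by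
    rw [← smul_mul_assoc, ← mul_smul_comm, smul_single, smul_eq_mul, mul_one]
  intro c d hcd
  simp only [hsmul] at hcd
  simpa using congrFun₂ ((bijective_adjugate_mul_mul hQ).injective hcd) i j

theorem dvd_mul_diagonal_mul_apply {P Q : Matrix n n R} {a : n → R} {d : R}
    (h : ∀ k, d ∣ a k) (i j : n) : d ∣ (P * diagonal a * Q) i j := by
  rw [mul_apply]
  simp only [mul_diagonal]
  exact Finset.dvd_sum fun k _ ↦ ((h k).mul_left _).mul_right _

theorem adjugate_diagonal_one_zero_mul_mul (B : Matrix (Fin 2) (Fin 2) R) :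
    adjugate (diagonal ![1, 0]) * B * diagonal ![1, 0] = B 1 0 • single 1 0 1 := by
  rw [adjugate_fin_two]
  ext i j
  fin_cases i <;> fin_cases j <;> simp [vecMul, dotProduct]

theorem setOf_adjugate_mul_mul_eq_range {η P Q : Matrix (Fin 2) (Fin 2) R}
    (hP : IsUnit P.det) (hη : η = P * diagonal ![1, 0] * Q) :
    {X | ∃ A, X = adjugate η * A * η} =
      Set.range fun c : R ↦ c • (adjugate Q * single 1 0 1 * Q) := by
  have key (A : Matrix (Fin 2) (Fin 2) R) :
      adjugate η * A * η = (adjugate P * A * P) 1 0 • (adjugate Q * single 1 0 1 * Q) := by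
    calc adjugate η * A * η
        = adjugate Q * (adjugate (diagonal ![1, 0]) * (adjugate P * A * P) * diagonal ![1, 0]) *
            Q := by
          rw [hη, adjugate_mul_distrib, adjugate_mul_distrib]
          simp only [Matrix.mul_assoc]
      _ = _ := by rw [adjugate_diagonal_one_zero_mul_mul, mul_smul_comm, smul_mul_assoc]
  ext X
  constructor
  · rintro ⟨A, rfl⟩
    exact ⟨_, (key A).symm⟩
  · rintro ⟨c, rfl⟩
    obtain ⟨A, hA⟩ := (bijective_adjugate_mul_mul hP).surjective (single 1 0 c)
    refine ⟨A, ?_⟩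
    simp only at hA ⊢
    rw [key, hA, single_apply_same]

-- The factors undo the reduction `!![u, v; -y, x] * diagonal ![x, y] * !![1, -v * y; 1, u * x]`.
theorem exists_diagonal_eq_mul_diagonal_one_mul_of_isCoprime {x y : R}
    (h : IsCoprime x y) : ∃ P Q : Matrix (Fin 2) (Fin 2) R, IsUnit P.det ∧ IsUnit Q.det ∧
      diagonal ![x, y] = P * diagonal ![1, x * y] * Q := by
  obtain ⟨u, v, huv⟩ := h
  refine ⟨!![x, -v; y, u], !![u * x, v * y; -1, 1], ?_, ?_, ?_⟩
  · rw [det_fin_two_of]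
    convert isUnit_one
    linear_combination huv
  · rw [det_fin_two_of]
    convert isUnit_one
    linear_combination huv
  · ext i j
    fin_cases i <;> fin_cases j <;> simp [vecMul, dotProduct]
    · linear_combination -x * huv
    · ring
    · ring
    · linear_combination -y * huv

end CommRing

section PrincipalIdealDomain

variable {R : Type*} [CommRing R] [IsDomain R] [IsPrincipalIdealRing R]

theorem exists_eq_mul_diagonal_mul_of_det_ne_zero {n : Type*} [Fintype n] [DecidableEq n]
    (A : Matrix n n R) (hA : A.det ≠ 0) :
    ∃ (P Q : Matrix n n R) (a : n → R), IsUnit P.det ∧ IsUnit Q.det ∧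
      A = P * diagonal a * Q := by
  let e := LinearEquiv.ofInjective A.mulVecLin (mulVec_injective_of_det_ne_zero hA)
  obtain ⟨bM, a, bN, hsnf⟩ :=
    Submodule.exists_smith_normal_form_of_rank_eq (Pi.basisFun R n) e.finrank_eq.symm
  let std := Pi.basisFun R n
  let bN' := bN.map e.symm
  have hdiag : LinearMap.toMatrix bN' bM A.mulVecLin = diagonal a := by
    ext i j
    have himage : A.mulVecLin (bN' j) = a j • bM j := by
      rw [← hsnf]
      exact congrArg Subtype.val (e.apply_symm_apply (bN j))
    rw [LinearMap.toMatrix_apply, himage, map_smul, bM.repr_self]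
    rcases eq_or_ne i j with rfl | hij
    · simp
    · simp [hij]
  refine ⟨std.toMatrix bM, bN'.toMatrix std, a,
    isUnit_det_of_left_inverse (bM.toMatrix_mul_toMatrix_flip std),
    isUnit_det_of_left_inverse (std.toMatrix_mul_toMatrix_flip bN'), ?_⟩
  have h := basis_toMatrix_mul_linearMap_toMatrix_mul_basis_toMatrix std bN' std bM A.mulVecLin
  rwa [hdiag, LinearMap.toMatrix_eq_toMatrix', ← Matrix.toLin'_apply',
    LinearMap.toMatrix'_toLin', eq_comm] at h

theorem exists_eq_mul_diagonal_one_mul_of_primitive (η : Matrix (Fin 2) (Fin 2) R)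
    (hprim : ∀ d : R, (∀ i j, d ∣ η i j) → IsUnit d) (hdet : η.det ≠ 0) :
    ∃ (P Q : Matrix (Fin 2) (Fin 2) R) (d : R), IsUnit P.det ∧ IsUnit Q.det ∧
      η = P * diagonal ![1, d] * Q := by
  obtain ⟨P₁, Q₁, a, hP₁, hQ₁, hη⟩ := exists_eq_mul_diagonal_mul_of_det_ne_zero η hdet
  have hcop : IsCoprime (a 0) (a 1) := IsRelPrime.isCoprime fun d h₀ h₁ ↦
    hprim d (hη ▸ dvd_mul_diagonal_mul_apply fun k ↦ by fin_cases k <;> assumption)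
  obtain ⟨P₂, Q₂, hP₂, hQ₂, ha⟩ := exists_diagonal_eq_mul_diagonal_one_mul_of_isCoprime hcop
  have ha' : diagonal a = P₂ * diagonal ![1, a 0 * a 1] * Q₂ := by
    rw [← ha]
    congr
    ext k
    fin_cases k <;> rfl
  refine ⟨P₁ * P₂, Q₂ * Q₁, a 0 * a 1, ?_, ?_, ?_⟩
  · rw [det_mul]
    exact hP₁.mul hP₂
  · rw [det_mul]
    exact hQ₂.mul hQ₁
  · rw [hη, ha']
    simp only [Matrix.mul_assoc]

theorem exists_map_eq_mul_diagonal_one_zero_mul {S : Type*} [CommRing S] (f : R →+* S)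
    (η : Matrix (Fin 2) (Fin 2) R) (hprim : ∀ d : R, (∀ i j, d ∣ η i j) → IsUnit d)
    (hdet : η.det ≠ 0) (hf : f η.det = 0) :
    ∃ P Q : Matrix (Fin 2) (Fin 2) S, IsUnit P.det ∧ IsUnit Q.det ∧
      η.map f = P * diagonal ![1, 0] * Q := by
  obtain ⟨P, Q, d, hP, hQ, hη⟩ := exists_eq_mul_diagonal_one_mul_of_primitive η hprim hdet
  have hdvd : η.det ∣ d := by
    rw [hη, det_mul, det_mul, det_diagonal, Fin.prod_univ_two]
    simpa using hQ.mul_right_dvd.mpr (hP.mul_left_dvd.mpr dvd_rfl)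
  have hd : f d = 0 := zero_dvd_iff.mp (hf ▸ map_dvd f hdvd)
  refine ⟨P.map f, Q.map f, ?_, ?_, ?_⟩
  · rw [← RingHom.mapMatrix_apply, ← RingHom.map_det]
    exact hP.map f
  · rw [← RingHom.mapMatrix_apply, ← RingHom.map_det]
    exact hQ.map f
  · rw [hη, Matrix.map_mul, Matrix.map_mul, diagonal_map (map_zero f)]
    congr 3
    ext k
    fin_cases k <;> simp [hd]

end PrincipalIdealDomain

end Matrix

/-- Let `η ∈ M₂(ℤ)` be primitive with `det η ≠ 0` and set `m = |det η|`.
The image of the map `A ↦ adj(η)·A·η` on `M₂(ℤ/mℤ)` is a cyclic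
`ℤ/mℤ`-submodule of cardinality `m` (hence isomorphic to `ℤ/mℤ`): it is
generated by a single element `N` under `ℤ/mℤ`-scaling. -/
theorem adj_conj_image_cyclic
    (η : Matrix (Fin 2) (Fin 2) ℤ)
    (hprim : ∀ d : ℤ, (∀ i j, d ∣ η i j) → IsUnit d)
    (hdet : η.det ≠ 0) :
    ∀ m : ℕ, m = η.det.natAbs →
    ∃ N : Matrix (Fin 2) (Fin 2) (ZMod m),
      (∃ A : Matrix (Fin 2) (Fin 2) (ZMod m),
        N = (η.adjugate.map (Int.cast : ℤ → ZMod m)) * A *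
              (η.map (Int.cast : ℤ → ZMod m))) ∧
      {X : Matrix (Fin 2) (Fin 2) (ZMod m) |
          ∃ A, X = (η.adjugate.map (Int.cast : ℤ → ZMod m)) * A *
              (η.map (Int.cast : ℤ → ZMod m))}
        = {X | ∃ c : ZMod m, X = c • N} ∧
      Nat.card {X : Matrix (Fin 2) (Fin 2) (ZMod m) |
          ∃ A, X = (η.adjugate.map (Int.cast : ℤ → ZMod m)) * A *
              (η.map (Int.cast : ℤ → ZMod m))} = m := by
  rintro m rfl
  obtain ⟨P, Q, hP, hQ, hη⟩ := exists_map_eq_mul_diagonal_one_zero_mul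
    (Int.castRingHom (ZMod η.det.natAbs)) η hprim hdet
    ((ZMod.intCast_zmod_eq_zero_iff_dvd _ _).mpr (Int.natAbs_dvd.mpr dvd_rfl))
  let N := adjugate Q * single 1 0 1 * Q
  have himage : {X | ∃ A, X = η.adjugate.map (Int.cast : ℤ → ZMod η.det.natAbs) * A *
      η.map Int.cast} = Set.range fun c : ZMod η.det.natAbs ↦ c • N := by
    have h := setOf_adjugate_mul_mul_eq_range hP hη
    rwa [← RingHom.mapMatrix_apply, ← RingHom.map_adjugate] at h
  have hcyclic : {X | ∃ c : ZMod η.det.natAbs, X = c • N} =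
      Set.range fun c : ZMod η.det.natAbs ↦ c • N := by
    ext X
    simp [eq_comm]
  refine ⟨N, ?_, himage.trans hcyclic.symm, ?_⟩
  · have hN : N ∈ Set.range fun c : ZMod η.det.natAbs ↦ c • N := ⟨1, one_smul _ _⟩
    rwa [← himage] at hN
  · rw [himage, Nat.card_range_of_injective (injective_smul_adjugate_mul_single_mul hQ 1 0),
      Nat.card_zmod]
end

section
/- Let 𝔽_q be a finite field and let W ∈ M₂(𝔽_q) be nonzero. Then there exists S ∈ M₂(𝔽_q) with tr(W·S) = 0 and det(S) ≠ 0. -/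
/-!
Over a field, the witness is `1` when `tr W = 0`. Otherwise some diagonal entry of `W` is
nonzero, say `W₀₀`; then `S = !![x, 1; 1, 0]` has determinant `-1` and
`tr(W S) = W₀₀ x + W₀₁ + W₁₀`, which vanishes for `x = -(W₀₁ + W₁₀) / W₀₀`.
-/

open Matrix

section

variable {F : Type*} [Field F] (W : Matrix (Fin 2) (Fin 2) F)

theorem exists_det_ne_zero_trace_mul_eq_zero_of_trace_eq_zero (h : W.trace = 0) :
    ∃ S : Matrix (Fin 2) (Fin 2) F, (W * S).trace = 0 ∧ S.det ≠ 0 :=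
  ⟨1, by rwa [mul_one], by simp⟩

theorem exists_det_ne_zero_trace_mul_eq_zero_of_apply_zero_zero_ne_zero (h : W 0 0 ≠ 0) :
    ∃ S : Matrix (Fin 2) (Fin 2) F, (W * S).trace = 0 ∧ S.det ≠ 0 := by
  refine ⟨!![-(W 0 1 + W 1 0) / W 0 0, 1; 1, 0], ?_, by simp [det_fin_two]⟩
  simp only [trace_fin_two, mul_apply, Fin.sum_univ_two, of_apply, cons_val', cons_val_zero,
    cons_val_one, cons_val_fin_one, empty_val']
  field_simp
  ring

theorem exists_det_ne_zero_trace_mul_eq_zero_of_apply_one_one_ne_zero (h : W 1 1 ≠ 0) :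
    ∃ S : Matrix (Fin 2) (Fin 2) F, (W * S).trace = 0 ∧ S.det ≠ 0 := by
  refine ⟨!![0, 1; 1, -(W 0 1 + W 1 0) / W 1 1], ?_, by simp [det_fin_two]⟩
  simp only [trace_fin_two, mul_apply, Fin.sum_univ_two, of_apply, cons_val', cons_val_zero,
    cons_val_one, cons_val_fin_one, empty_val']
  field_simp
  ring

end

theorem exists_invertible_traceless_pairing_general
    (F : Type*) [Field F]
    (W : Matrix (Fin 2) (Fin 2) F) :
    ∃ S : Matrix (Fin 2) (Fin 2) F, (W * S).trace = 0 ∧ S.det ≠ 0 := by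
  by_cases h₀ : W 0 0 = 0
  · by_cases h₁ : W 1 1 = 0
    · exact exists_det_ne_zero_trace_mul_eq_zero_of_trace_eq_zero W
        (by simp [trace_fin_two, h₀, h₁])
    · exact exists_det_ne_zero_trace_mul_eq_zero_of_apply_one_one_ne_zero W h₁
  · exact exists_det_ne_zero_trace_mul_eq_zero_of_apply_zero_zero_ne_zero W h₀

/-- Over any finite field `F`, for every nonzero `W ∈ M₂(F)` there exists an
invertible `S ∈ M₂(F)` with `tr(W·S) = 0`. -/
theorem exists_invertible_traceless_pairing
    (F : Type*) [Field F] [Fintype F]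
    (W : Matrix (Fin 2) (Fin 2) F) (hW : W ≠ 0) :
    ∃ S : Matrix (Fin 2) (Fin 2) F, (W * S).trace = 0 ∧ S.det ≠ 0 :=
  exists_invertible_traceless_pairing_general F W
end

section
/- Let O be an order closed under the standard involution † in a quaternion algebra over ℚ, with reduced trace trd(x) = x + x† and reduced norm nrd(x) = x·x†. Let δ, A, M, Z ∈ O and K ∈ ℤ, K ≠ 0, with K | nrd(δ). Suppose Z·δ†·A·δ + M·δ ∈ K·O, trd(Z·δ†) ∈ K·ℤ, and trd(2·Z·δ†·A + M) ∈ K·ℤ. Then (M − M†)·δ ∈ K·O. -/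
open Quaternion

/-- Let `O` be an order closed under the standard involution (star) in a
quaternion algebra `B = ℍ[ℚ, c₁, c₂]`, with reduced trace `trd x = x + star x`
and reduced norm `nrd x = x * star x` (integers on `O`, viewed in `B`).
Let `δ, A, M, Z ∈ O` and `K ∈ ℤ`, `K ≠ 0`, with `K ∣ nrd δ`. If
`Z·δ†·A·δ + M·δ ∈ K·O`, `trd(Z·δ†) ∈ K·ℤ` and `trd(2·Z·δ†·A + M) ∈ K·ℤ`,
then `(M − M†)·δ ∈ K·O`. -/
theorem order_involution_congruence
    (c₁ c₂ : ℚ) (O : Subring ℍ[ℚ, c₁, c₂])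
    (hstar : ∀ x ∈ O, star x ∈ O)
    (δ A M Z : ℍ[ℚ, c₁, c₂])
    (hδ : δ ∈ O) (hA : A ∈ O) (hM : M ∈ O) (hZ : Z ∈ O)
    (K : ℤ) (hK : K ≠ 0)
    (hKnrd : ∃ t : ℤ, δ * star δ = ((K * t : ℤ) : ℍ[ℚ, c₁, c₂]))
    (h1 : ∃ w ∈ O, Z * star δ * A * δ + M * δ = (K : ℤ) • w)
    (h2 : ∃ t : ℤ, Z * star δ + star (Z * star δ)
            = ((K * t : ℤ) : ℍ[ℚ, c₁, c₂]))
    (h3 : ∃ t : ℤ, (2 * Z * star δ * A + M) + star (2 * Z * star δ * A + M)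
            = ((K * t : ℤ) : ℍ[ℚ, c₁, c₂])) :
    ∃ w ∈ O, (M - star M) * δ = (K : ℤ) • w := by
  obtain ⟨t, ht⟩ := hKnrd
  obtain ⟨w₁, hw₁O, hw₁⟩ := h1
  obtain ⟨t₂, ht₂⟩ := h2
  obtain ⟨t₃, ht₃⟩ := h3
  have hδZ : δ * star Z = ((K * t₂ : ℤ) : ℍ[ℚ, c₁, c₂]) - Z * star δ := by
    have e : star (Z * star δ) = δ * star Z := by rw [star_mul, star_star]
    rw [← e]; exact eq_sub_of_add_eq' ht₂
  have hδδ : star δ * δ = ((K * t : ℤ) : ℍ[ℚ, c₁, c₂]) := by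
    rw [star_comm_self']; exact ht
  refine ⟨(2 : ℤ) • w₁ + (2 * t₂) • (star A * δ) - (2 * t) • (star A * Z) - t₃ • δ,
    ?_, ?_⟩
  · exact sub_mem (sub_mem (add_mem (zsmul_mem hw₁O 2)
      (zsmul_mem (mul_mem (hstar A hA) hδ) _))
      (zsmul_mem (mul_mem (hstar A hA) hZ) _)) (zsmul_mem hδ _)
  · have expand : (M - star M) * δ
        = 2 * (Z * star δ * A * δ + M * δ)
          + (star A * (δ * star Z)) * (2 * δ)
          - ((2 * Z * star δ * A + M) + star (2 * Z * star δ * A + M)) * δ := by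
      simp only [star_add, star_mul, star_star, star_ofNat]
      noncomm_ring
    rw [expand, hw₁, hδZ, ht₃]
    have step : (star A * (((K * t₂ : ℤ) : ℍ[ℚ, c₁, c₂]) - Z * star δ)) * (2 * δ)
        = star A * ((K * t₂ : ℤ) : ℍ[ℚ, c₁, c₂]) * (2 * δ)
          - 2 * (star A * Z * (star δ * δ)) := by noncomm_ring
    rw [step, hδδ]
    have helper : ∀ (n : ℤ) (x y : ℍ[ℚ, c₁, c₂]),
        x * ((n : ℤ) : ℍ[ℚ, c₁, c₂]) * y = ((n : ℤ) : ℍ[ℚ, c₁, c₂]) * (x * y) := by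
      intro n x y
      rw [← (Int.cast_commute n x).eq, mul_assoc]
    have cast1 : star A * ((K * t₂ : ℤ) : ℍ[ℚ, c₁, c₂]) * (2 * δ)
        = (K : ℤ) • ((2 * t₂ : ℤ) • (star A * δ)) := by
      rw [helper, smul_smul, zsmul_eq_mul]
      push_cast
      noncomm_ring
    have cast2 : 2 * (star A * Z * ((K * t : ℤ) : ℍ[ℚ, c₁, c₂]))
        = (K : ℤ) • ((2 * t : ℤ) • (star A * Z)) := by
      rw [← (Int.cast_commute (K * t) (star A * Z)).eq, smul_smul, zsmul_eq_mul]
      push_cast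
      noncomm_ring
    have cast3 : ((K * t₃ : ℤ) : ℍ[ℚ, c₁, c₂]) * δ = (K : ℤ) • (t₃ • δ) := by
      rw [smul_smul, zsmul_eq_mul]
    have cast4 : 2 * ((K : ℤ) • w₁) = (K : ℤ) • ((2 : ℤ) • w₁) := by
      rw [mul_smul_comm, zsmul_eq_mul]
      norm_num
    rw [cast1, cast2, cast3, cast4]
    module
end

section
/- Let p be an odd prime and u ∈ ℤ a quadratic nonresidue modulo p. If z₁, z₂, z₃, z₄ ∈ ℤ_p are not all divisible by p, then the p-adic valuation of z₁² − u·z₂² − p·z₃² + p·u·z₄² is at most 1. -/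
lemma padic_p_dvd_iff_toZMod_eq_zero (p : ℕ) [Fact p.Prime] (x : ℤ_[p]) :
    (p : ℤ_[p]) ∣ x ↔ PadicInt.toZMod x = 0 := by
  rw [← Ideal.mem_span_singleton, ← PadicInt.maximalIdeal_eq_span_p,
    ← PadicInt.ker_toZMod, RingHom.mem_ker]

lemma zmod_sq_eq_nonsquare_mul_sq (p : ℕ) [Fact p.Prime] (u : ZMod p)
    (hu : ¬ IsSquare u) (a b : ZMod p) (h : a ^ 2 = u * b ^ 2) :
    a = 0 ∧ b = 0 := by
  by_cases hb : b = 0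
  · subst hb
    simp only [ne_eq, OfNat.ofNat_ne_zero, not_false_eq_true, zero_pow, mul_zero,
      pow_eq_zero_iff] at h
    exact ⟨h, rfl⟩
  · exfalso
    apply hu
    refine ⟨a * b⁻¹, ?_⟩
    have : (a * b⁻¹) * (a * b⁻¹) = (a^2) * (b^2)⁻¹ := by rw [← inv_pow]; ring
    rw [this, h, mul_assoc, mul_inv_cancel₀ (pow_ne_zero 2 hb), mul_one]

lemma key_step (p : ℕ) [Fact p.Prime] (u : ℤ) (hu : ¬ IsSquare ((u : ZMod p)))
    (a b : ℤ_[p]) (h : (p : ℤ_[p]) ∣ (a ^ 2 - (u : ℤ_[p]) * b ^ 2)) :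
    (p : ℤ_[p]) ∣ a ∧ (p : ℤ_[p]) ∣ b := by
  rw [padic_p_dvd_iff_toZMod_eq_zero] at h
  simp only [map_sub, map_mul, map_pow, map_intCast, sub_eq_zero] at h
  have := zmod_sq_eq_nonsquare_mul_sq p _ hu (PadicInt.toZMod a) (PadicInt.toZMod b) h
  rw [padic_p_dvd_iff_toZMod_eq_zero, padic_p_dvd_iff_toZMod_eq_zero]
  exact this

/-- Let `p` be an odd prime and `u ∈ ℤ` a quadratic nonresidue mod `p`. If
`z₁, z₂, z₃, z₄ ∈ ℤ_p` are not all divisible by `p`, then the `p`-adic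
valuation of `z₁² − u·z₂² − p·z₃² + p·u·z₄²` is at most `1`, i.e. it is not
divisible by `p²`. -/
theorem ramified_quaternion_norm_valuation_le_one
    (p : ℕ) [Fact p.Prime] (hp : p ≠ 2)
    (u : ℤ) (hu : ¬ IsSquare ((u : ZMod p)))
    (z₁ z₂ z₃ z₄ : ℤ_[p])
    (hz : ¬ ((p : ℤ_[p]) ∣ z₁ ∧ (p : ℤ_[p]) ∣ z₂ ∧
             (p : ℤ_[p]) ∣ z₃ ∧ (p : ℤ_[p]) ∣ z₄)) :
    ¬ ((p : ℤ_[p]) ^ 2 ∣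
        (z₁ ^ 2 - (u : ℤ_[p]) * z₂ ^ 2 - (p : ℤ_[p]) * z₃ ^ 2
          + (p : ℤ_[p]) * (u : ℤ_[p]) * z₄ ^ 2)) := by
  intro hdvd
  set N := z₁ ^ 2 - (u : ℤ_[p]) * z₂ ^ 2 - (p : ℤ_[p]) * z₃ ^ 2
          + (p : ℤ_[p]) * (u : ℤ_[p]) * z₄ ^ 2 with hN
  have hpN : (p : ℤ_[p]) ∣ N := dvd_trans (dvd_pow_self _ two_ne_zero) hdvd
  have h12 : (p : ℤ_[p]) ∣ (z₁ ^ 2 - (u : ℤ_[p]) * z₂ ^ 2) := by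
    have : z₁ ^ 2 - (u : ℤ_[p]) * z₂ ^ 2 =
        N + (p : ℤ_[p]) * (z₃ ^ 2 - (u : ℤ_[p]) * z₄ ^ 2) := by rw [hN]; ring
    rw [this]
    exact dvd_add hpN (Dvd.intro _ rfl)
  obtain ⟨h1, h2⟩ := key_step p u hu z₁ z₂ h12
  obtain ⟨a, ha⟩ := id h1
  obtain ⟨b, hb⟩ := id h2
  have hpne : (p : ℤ_[p]) ≠ 0 := by
    exact_mod_cast Nat.cast_ne_zero.mpr (Fact.out : p.Prime).ne_zero
  have h34 : (p : ℤ_[p]) ∣ (z₃ ^ 2 - (u : ℤ_[p]) * z₄ ^ 2) := by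
    have key : (p : ℤ_[p]) ^ 2 ∣ (p : ℤ_[p]) * (z₃ ^ 2 - (u : ℤ_[p]) * z₄ ^ 2) := by
      have : (p : ℤ_[p]) * (z₃ ^ 2 - (u : ℤ_[p]) * z₄ ^ 2) =
          (p : ℤ_[p]) ^ 2 * (a ^ 2 - (u : ℤ_[p]) * b ^ 2) - N := by
        rw [hN, ha, hb]; ring
      rw [this]
      exact dvd_sub (Dvd.intro _ rfl) hdvd
    rw [pow_two] at key
    exact (mul_dvd_mul_iff_left hpne).mp key
  obtain ⟨h3, h4⟩ := key_step p u hu z₃ z₄ h34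
  exact hz ⟨h1, h2, h3, h4⟩
end
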